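/- arXiv:1306.0364 — 3 statements merged into one kernel-verified Lean document; each statement's English description precedes it below -/
import Mathlib

section
/- The Carleman series of the Benini distribution converges: Σ_{k=1}^∞ (μ_k)^{-1/(2k)} < ∞, where μ_k is the k-th moment of Ben(β). -/
/-!
Substituting `x = exp t`, the `n`-th moment integrand becomes `2βt · exp((n - 1)t - βt²)`, whose
exponent peaks near `t = n / (2β)`. On the window `t ∈ [c, c + 1]` with `c = n / (2β)` it is at
least `n · exp(βc² - β - c - 1)`, and the window has `x`-length `eᶜ(e - 1) ≥ eᶜ`, so
`μₙ ≥ exp(n² / (4β) - β - 1)`. Hence `μₙ ^ (-1 / (2n)) ≤ exp((β + 1) / 2) · exp(-n / (8β))`,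
and the Carleman series is dominated by a geometric series.
-/

open Real MeasureTheory Set

namespace Benini

noncomputable def density (β x : ℝ) : ℝ :=
  2 * β * Real.log x / x * Real.exp (-β * (Real.log x) ^ 2)

noncomputable def moment (β : ℝ) (n : ℕ) : ℝ :=
  ∫ x in Ioi (1 : ℝ), x ^ n * density β x

variable {β : ℝ}

lemma pow_mul_density_nonneg (hβ : 0 ≤ β) (n : ℕ) {x : ℝ} (hx : 1 ≤ x) :
    0 ≤ x ^ n * density β x := by
  have := Real.log_nonneg hx
  have : 0 < x := by linarith
  unfold density
  positivity

lemma moment_nonneg (hβ : 0 ≤ β) (n : ℕ) : 0 ≤ moment β n :=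
  setIntegral_nonneg measurableSet_Ioi fun _ hx => pow_mul_density_nonneg hβ n (le_of_lt hx)

lemma exp_pow_mul_density_exp (β t : ℝ) (n : ℕ) :
    exp t ^ n * density β (exp t) = 2 * β * t * exp ((n - 1) * t - β * t ^ 2) := by
  rw [density, Real.log_exp, ← Real.exp_nat_mul, div_eq_mul_inv, ← Real.exp_neg,
    show (n - 1) * t - β * t ^ 2 = n * t + (-t + -β * t ^ 2) by ring, Real.exp_add, Real.exp_add]
  ring

lemma le_pow_mul_density (hβ : 0 < β) {n : ℕ} {c : ℝ} (hc : (n : ℝ) = 2 * β * c) {x : ℝ}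
    (hx : x ∈ Icc (exp c) (exp (c + 1))) :
    n * exp (β * c ^ 2 - β - c - 1) ≤ x ^ n * density β x := by
  have hx0 : 0 < x := (exp_pos c).trans_le hx.1
  obtain ⟨t, rfl⟩ : ∃ t, x = exp t := ⟨Real.log x, (exp_log hx0).symm⟩
  rw [exp_pow_mul_density_exp]
  obtain ⟨hct, htc⟩ : c ≤ t ∧ t ≤ c + 1 := by simpa using hx
  have hc0 : 0 ≤ c := by nlinarith [(n.cast_nonneg : (0 : ℝ) ≤ n)]
  -- `(n - 1)t - βt² = βc² - β(t - c)² - t` once `n = 2βc`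
  have hexp : β * c ^ 2 - β - c - 1 ≤ (n - 1) * t - β * t ^ 2 := by
    rw [hc]; nlinarith [mul_nonneg (sub_nonneg.2 hct) (sub_nonneg.2 htc)]
  have hn : (n : ℝ) ≤ 2 * β * t := by rw [hc]; gcongr
  gcongr
  nlinarith

lemma exp_le_moment (hβ : 0 < β) {n : ℕ} (hn : 0 < n)
    (hint : IntegrableOn (fun x => x ^ n * density β x) (Ioi 1)) :
    exp (n ^ 2 / (4 * β) - β - 1) ≤ moment β n := by
  set c : ℝ := n / (2 * β)
  have hc : (n : ℝ) = 2 * β * c := by simp only [c]; field_simp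
  have hn1 : (1 : ℝ) ≤ n := by exact_mod_cast hn
  have hwindow : Icc (exp c) (exp (c + 1)) ⊆ Ioi 1 := fun x hx =>
    (one_lt_exp_iff.2 (by positivity)).trans_le hx.1
  have hwidth : exp c ≤ volume.real (Icc (exp c) (exp (c + 1))) := by
    rw [Real.volume_real_Icc_of_le (exp_le_exp.2 (by linarith)), Real.exp_add]
    nlinarith [exp_pos c, Real.exp_one_gt_d9]
  calc exp (n ^ 2 / (4 * β) - β - 1)
      = exp (β * c ^ 2 - β - c - 1) * exp c := by
        rw [← Real.exp_add]; congr 1; simp only [c]; field_simp; ring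
    _ ≤ n * exp (β * c ^ 2 - β - c - 1) * volume.real (Icc (exp c) (exp (c + 1))) := by
        rw [mul_assoc]
        exact (mul_le_mul_of_nonneg_left hwidth (exp_pos _).le).trans
          (le_mul_of_one_le_left (by positivity) hn1)
    _ ≤ ∫ x in Icc (exp c) (exp (c + 1)), x ^ n * density β x :=
        setIntegral_ge_of_const_le_real measurableSet_Icc measure_Icc_lt_top.ne
          (fun x hx => le_pow_mul_density hβ hc hx) (hint.mono_set hwindow)
    _ ≤ moment β n :=
        setIntegral_mono_set hint
          ((ae_restrict_mem measurableSet_Ioi).mono fun _ hx =>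
            pow_mul_density_nonneg hβ.le n (le_of_lt hx))
          hwindow.eventuallyLE

lemma moment_rpow_le (hβ : 0 < β) {n : ℕ} (hn : 0 < n) :
    moment β n ^ (-1 / (2 * n : ℝ)) ≤ exp ((β + 1) / 2) * exp (n * -(8 * β)⁻¹) := by
  have hp : -1 / (2 * n : ℝ) < 0 := div_neg_of_neg_of_pos (by norm_num) (by positivity)
  by_cases hint : IntegrableOn (fun x => x ^ n * density β x) (Ioi 1)
  swap
  · -- a non-integrable moment is `0` as a Bochner integral, and `0 ^ p = 0` for `p ≠ 0`
    rw [moment, integral_undef hint, zero_rpow hp.ne]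
    positivity
  have hn1 : (1 : ℝ) ≤ n := by exact_mod_cast hn
  calc moment β n ^ (-1 / (2 * n : ℝ))
      ≤ exp (n ^ 2 / (4 * β) - β - 1) ^ (-1 / (2 * n : ℝ)) :=
        rpow_le_rpow_of_nonpos (exp_pos _) (exp_le_moment hβ hn hint) hp.le
    _ = exp ((β + 1) / (2 * n) + n * -(8 * β)⁻¹) := by
        rw [← Real.exp_mul]; congr 1; field_simp; ring
    _ ≤ exp ((β + 1) / 2) * exp (n * -(8 * β)⁻¹) := by
        rw [← Real.exp_add]; gcongr
        linarith

end Benini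

open Benini in
theorem benini_carleman_convergent (β : ℝ) (hβ : 0 < β) :
    Summable (fun k : ℕ =>
      (∫ x in Set.Ioi (1 : ℝ),
          x ^ (k + 1) * (2 * β * Real.log x / x * Real.exp (-β * (Real.log x) ^ 2))) ^
        (-(1 : ℝ) / (2 * (k + 1)))) := by
  have hgeom : Summable fun n : ℕ => exp ((β + 1) / 2) * exp (n * -(8 * β)⁻¹) :=
    (summable_exp_nat_mul_iff.2 (by simpa using hβ)).mul_left _
  refine ((summable_nat_add_iff 1).2 hgeom).of_nonneg_of_le
    (fun k => rpow_nonneg (moment_nonneg hβ.le (k + 1)) _) fun k => ?_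
  have hk := moment_rpow_le (n := k + 1) hβ k.succ_pos
  rw [Nat.cast_succ] at hk ⊢
  exact hk
end

section
/- For every natural number n, ∫_0^∞ x^n · exp(-x^{1/4}) · sin(x^{1/4}) dx = 0. -/
/-!
Substituting `x = t ^ 4` turns the integral into `4 ∫₀^∞ t ^ (4n+3) e^(-t) sin t dt`, the imaginary
part of `4 ∫₀^∞ t ^ (4n+3) e^(-(1-i)t) dt = 4 (4n+3)! / (1-i) ^ (4n+4)`. Since `(1-i) ^ 4 = -4`,
this number is real.
-/

open Real MeasureTheory Set
open Filter Topology
open scoped Complex Nat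

lemma norm_cexp_neg_mul_ofReal (z : ℂ) (t : ℝ) : ‖cexp (-z * t)‖ = rexp (-z.re * t) := by
  simp [Complex.norm_exp]

lemma hasDerivAt_pow_succ_mul_cexp_neg_mul (z : ℂ) (m : ℕ) (t : ℝ) :
    HasDerivAt (fun s : ℝ => (s : ℂ) ^ (m + 1) * cexp (-z * s))
      ((m + 1) * ((t : ℂ) ^ m * cexp (-z * t)) - z * ((t : ℂ) ^ (m + 1) * cexp (-z * t))) t := by
  have hpow : HasDerivAt (fun w : ℂ => w ^ (m + 1)) ((m + 1) * (t : ℂ) ^ m) t := by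
    simpa using hasDerivAt_pow (m + 1) (t : ℂ)
  have hexp : HasDerivAt (fun w : ℂ => cexp (-z * w)) (cexp (-z * t) * -z) t := by
    simpa using ((hasDerivAt_id (t : ℂ)).const_mul (-z)).cexp
  exact (hpow.mul hexp).comp_ofReal.congr_deriv (by ring)

section PowMulExpNeg

variable {z : ℂ}

lemma integrableOn_pow_mul_cexp_neg_mul (hz : 0 < z.re) (m : ℕ) :
    IntegrableOn (fun t : ℝ => (t : ℂ) ^ m * cexp (-z * t)) (Ioi 0) := by
  have hdom := integrableOn_rpow_mul_exp_neg_mul_rpow (s := m)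
    (neg_one_lt_zero.trans_le m.cast_nonneg) one_pos hz
  refine hdom.mono' (by fun_prop) ?_
  filter_upwards [ae_restrict_mem measurableSet_Ioi] with t (ht : 0 < t)
  simp only [norm_mul, norm_pow, Complex.norm_real, Real.norm_eq_abs, abs_of_pos ht,
    norm_cexp_neg_mul_ofReal, Real.rpow_natCast, Real.rpow_one, le_refl]

lemma tendsto_pow_mul_cexp_neg_mul_atTop (hz : 0 < z.re) (m : ℕ) :
    Tendsto (fun t : ℝ => (t : ℂ) ^ m * cexp (-z * t)) atTop (𝓝 0) := by
  refine squeeze_zero_norm' ?_ (tendsto_rpow_mul_exp_neg_mul_atTop_nhds_zero m z.re hz)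
  filter_upwards [eventually_ge_atTop 0] with t ht
  simp only [norm_mul, norm_pow, Complex.norm_real, Real.norm_eq_abs, abs_of_nonneg ht,
    norm_cexp_neg_mul_ofReal, Real.rpow_natCast, le_refl]

lemma mul_integral_pow_succ_mul_cexp_neg_mul (hz : 0 < z.re) (m : ℕ) :
    z * ∫ t in Ioi (0 : ℝ), (t : ℂ) ^ (m + 1) * cexp (-z * t)
      = (m + 1) * ∫ t in Ioi (0 : ℝ), (t : ℂ) ^ m * cexp (-z * t) := by
  have hint := integrableOn_pow_mul_cexp_neg_mul hz
  have h := integral_Ioi_of_hasDerivAt_of_tendsto'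
    (fun t _ => hasDerivAt_pow_succ_mul_cexp_neg_mul z m t)
    (((hint m).const_mul _).sub ((hint (m + 1)).const_mul z))
    (tendsto_pow_mul_cexp_neg_mul_atTop hz (m + 1))
  rw [integral_sub ((hint m).const_mul _) ((hint (m + 1)).const_mul z), integral_const_mul,
    integral_const_mul] at h
  rw [Complex.ofReal_zero, zero_pow m.succ_ne_zero, zero_mul, sub_zero] at h
  linear_combination -h

theorem integral_pow_mul_cexp_neg_mul (hz : 0 < z.re) (m : ℕ) :
    ∫ t in Ioi (0 : ℝ), (t : ℂ) ^ m * cexp (-z * t) = m ! / z ^ (m + 1) := by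
  have hz0 : z ≠ 0 := by rintro rfl; simp at hz
  induction m with
  | zero => simpa using integral_exp_mul_complex_Ioi (a := -z) (by simpa) 0
  | succ m ih =>
    have h := mul_integral_pow_succ_mul_cexp_neg_mul hz m
    rw [ih] at h
    have hcancel : (m ! / z ^ (m + 1) : ℂ) * z ^ (m + 1) = m ! :=
      div_mul_cancel₀ _ (pow_ne_zero _ hz0)
    rw [eq_div_iff (pow_ne_zero _ hz0), Nat.factorial_succ]
    push_cast
    linear_combination z ^ (m + 1) * h + (m + 1) * hcancel

end PowMulExpNeg

lemma im_pow_mul_cexp_neg_one_sub_I_mul (m : ℕ) (t : ℝ) :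
    ((t : ℂ) ^ m * cexp (-(1 - Complex.I) * t)).im = t ^ m * rexp (-t) * Real.sin t := by
  rw [← Complex.ofReal_pow, Complex.im_ofReal_mul, Complex.exp_im]
  simp [mul_assoc]

theorem integral_pow_four_mul_add_three_mul_exp_neg_mul_sin_eq_zero (n : ℕ) :
    ∫ t in Ioi (0 : ℝ), t ^ (4 * n + 3) * rexp (-t) * Real.sin t = 0 := by
  have hz : 0 < (1 - Complex.I).re := by simp
  have h4 : (1 - Complex.I) ^ 4 = -4 := by
    linear_combination (Complex.I ^ 2 - 4 * Complex.I + 5) * Complex.I_sq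
  calc _ = (∫ t in Ioi (0 : ℝ), (t : ℂ) ^ (4 * n + 3) * cexp (-(1 - Complex.I) * t)).im := by
        simp_rw [← im_pow_mul_cexp_neg_one_sub_I_mul]
        exact integral_im (integrableOn_pow_mul_cexp_neg_mul hz _)
    _ = (((4 * n + 3) ! / (-4) ^ (n + 1) : ℝ) : ℂ).im := by
        rw [integral_pow_mul_cexp_neg_mul hz, show 4 * n + 3 + 1 = 4 * (n + 1) by ring,
          pow_mul, h4]
        push_cast
        rfl
    _ = 0 := Complex.ofReal_im _

theorem stieltjes_vanishing_moments (n : ℕ) :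
    (∫ x in Set.Ioi (0 : ℝ),
        x ^ n * Real.exp (-(x ^ ((1 : ℝ) / 4))) * Real.sin (x ^ ((1 : ℝ) / 4))) = 0 := by
  rw [← integral_comp_rpow_Ioi_of_pos (p := 4) four_pos]
  calc _ = ∫ t in Ioi (0 : ℝ), 4 * (t ^ (4 * n + 3) * rexp (-t) * Real.sin t) := by
        refine setIntegral_congr_fun measurableSet_Ioi fun t (ht : 0 < t) => ?_
        have hroot : (t ^ (4 : ℝ)) ^ ((1 : ℝ) / 4) = t := by
          rw [← Real.rpow_mul ht.le]; norm_num
        rw [hroot, smul_eq_mul, show (4 : ℝ) - 1 = 3 by norm_num, Real.rpow_ofNat,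
          Real.rpow_ofNat, ← pow_mul]
        ring
    _ = 0 := by
        rw [integral_const_mul, integral_pow_four_mul_add_three_mul_exp_neg_mul_sin_eq_zero,
          mul_zero]
end

section
/- For every natural number k, ∫_1^∞ x^k · exp(-(x-1)^{1/4}) · sin((x-1)^{1/4}) dx = 0. -/
open Real MeasureTheory Set

/-!
Substituting `y = x ^ 4` turns `∫₀^∞ yⁿ e^{-y^{1/4}} sin y^{1/4} dy` into
`4 ∫₀^∞ x^{4n+3} e^{-x} sin x dx`, the imaginary part of
`4 ∫₀^∞ x^{4n+3} e^{-(1-i)x} dx = 4 (4n+3)! / (1-i)^{4n+4}`, which is real since `(1-i)⁴ = -4`.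
So the weight `e^{-y^{1/4}} sin y^{1/4}` is orthogonal on `(0, ∞)` to every polynomial, in
particular to `(y + 1)ᵏ`, and the translation `x = y + 1` gives the theorem.
-/

open Complex Polynomial
open scoped Nat

lemma norm_ofReal_pow_mul_cexp_mul (m : ℕ) (a : ℂ) {t : ℝ} (ht : 0 ≤ t) :
    ‖(t : ℂ) ^ m * cexp (a * t)‖ = t ^ m * Real.exp (a.re * t) := by
  rw [norm_mul, norm_pow, Complex.norm_exp, Complex.norm_real, Real.norm_of_nonneg ht,
    Complex.re_mul_ofReal]

lemma integrableOn_pow_mul_cexp_mul_Ioi (m : ℕ) {a : ℂ} (ha : a.re < 0) :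
    IntegrableOn (fun t : ℝ => (t : ℂ) ^ m * cexp (a * t)) (Ioi 0) := by
  have hdom := integrableOn_rpow_mul_exp_neg_mul_rpow (s := m) (p := 1)
    (neg_one_lt_zero.trans_le m.cast_nonneg) one_pos (neg_pos.mpr ha)
  refine hdom.mono' (by fun_prop) ?_
  filter_upwards [ae_restrict_mem measurableSet_Ioi] with t ht
  rw [norm_ofReal_pow_mul_cexp_mul m a (le_of_lt ht), rpow_one, rpow_natCast, neg_neg]

lemma integral_pow_mul_cexp_mul_Ioi (m : ℕ) {a : ℂ} (ha : a.re < 0) :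
    ∫ t in Ioi (0 : ℝ), (t : ℂ) ^ m * cexp (a * t) = m ! / (-a) ^ (m + 1) := by
  have ha0 : a ≠ 0 := by rintro rfl; simp at ha
  induction m with
  | zero => simpa [neg_div, div_neg] using integral_exp_mul_complex_Ioi ha 0
  | succ m ih =>
    -- `t ^ (m + 1) * exp (a * t)` vanishes at `0` and at `∞`, so its derivative integrates to 0
    have hderiv : ∀ t : ℝ, HasDerivAt (fun t : ℝ => (t : ℂ) ^ (m + 1) * cexp (a * t))
        ((m + 1) * ((t : ℂ) ^ m * cexp (a * t)) + a * ((t : ℂ) ^ (m + 1) * cexp (a * t))) t :=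
      fun t => ((hasDerivAt_pow (m + 1) (t : ℂ)).mul
        ((hasDerivAt_id (t : ℂ)).const_mul a).cexp).comp_ofReal.congr_deriv (by simp; ring)
    have hint := (integrableOn_pow_mul_cexp_mul_Ioi m ha).const_mul ((m : ℂ) + 1)
    have hint' := (integrableOn_pow_mul_cexp_mul_Ioi (m + 1) ha).const_mul a
    have hlim := tendsto_zero_of_hasDerivAt_of_integrableOn_Ioi (fun t _ => hderiv t)
      (hint.add hint') (integrableOn_pow_mul_cexp_mul_Ioi (m + 1) ha)
    have hftc := integral_Ioi_of_hasDerivAt_of_tendsto' (fun t _ => hderiv t)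
      (hint.add hint') hlim
    rw [integral_add hint hint', integral_const_mul, integral_const_mul, ih] at hftc
    simp only [Complex.ofReal_zero, zero_pow m.succ_ne_zero, zero_mul, sub_zero] at hftc
    rw [pow_succ, ← div_div, Nat.factorial_succ, Nat.cast_mul, Nat.cast_succ,
      eq_div_iff (neg_ne_zero.mpr ha0)]
    linear_combination -hftc

lemma im_ofReal_pow_mul_cexp_neg_one_add_I (m : ℕ) (x : ℝ) :
    ((x : ℂ) ^ m * cexp ((-1 + I) * x)).im = x ^ m * (Real.exp (-x) * Real.sin x) := by
  rw [← Complex.ofReal_pow, Complex.im_ofReal_mul, add_mul, Complex.exp_add, neg_one_mul,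
    ← Complex.ofReal_neg, ← Complex.ofReal_exp, Complex.im_ofReal_mul, mul_comm I,
    Complex.exp_ofReal_mul_I_im]

lemma integrableOn_pow_mul_exp_neg_mul_sin (m : ℕ) :
    IntegrableOn (fun x : ℝ => x ^ m * (Real.exp (-x) * Real.sin x)) (Ioi 0) := by
  have h := (integrableOn_pow_mul_cexp_mul_Ioi m (a := -1 + I) (by simp)).im
  simp only [RCLike.im_to_complex, im_ofReal_pow_mul_cexp_neg_one_add_I] at h
  exact h

lemma integral_pow_mul_exp_neg_mul_sin (m : ℕ) :
    ∫ x in Ioi (0 : ℝ), x ^ m * (Real.exp (-x) * Real.sin x) = (m ! / (1 - I) ^ (m + 1)).im := by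
  calc ∫ x in Ioi (0 : ℝ), x ^ m * (Real.exp (-x) * Real.sin x)
      = ∫ x in Ioi (0 : ℝ), ((x : ℂ) ^ m * cexp ((-1 + I) * x)).im := by
        simp_rw [im_ofReal_pow_mul_cexp_neg_one_add_I]
    _ = (∫ x in Ioi (0 : ℝ), (x : ℂ) ^ m * cexp ((-1 + I) * x)).im :=
        integral_im (integrableOn_pow_mul_cexp_mul_Ioi m (by simp))
    _ = (m ! / (1 - I) ^ (m + 1)).im := by
        rw [integral_pow_mul_cexp_mul_Ioi m (by simp), neg_add, neg_neg, ← sub_eq_add_neg]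

lemma integral_pow_four_mul_add_three_mul_exp_neg_mul_sin (n : ℕ) :
    ∫ x in Ioi (0 : ℝ), x ^ (4 * n + 3) * (Real.exp (-x) * Real.sin x) = 0 := by
  have h4 : (1 - I) ^ 4 = -4 := by linear_combination (I ^ 2 - 4 * I + 5) * I_sq
  rw [integral_pow_mul_exp_neg_mul_sin, show 4 * n + 3 + 1 = 4 * (n + 1) by ring, pow_mul, h4]
  norm_cast

lemma rpow_smul_comp_rpow_one_div (f : ℝ → ℝ) (n : ℕ) {k : ℕ} (hk : k ≠ 0) {x : ℝ}
    (hx : 0 < x) :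
    (|(k : ℝ)| * x ^ ((k : ℝ) - 1)) • ((x ^ (k : ℝ)) ^ n * f ((x ^ (k : ℝ)) ^ ((1 : ℝ) / k))) =
      k * (x ^ (k * n + (k - 1)) * f x) := by
  rw [← rpow_mul hx.le, mul_one_div_cancel (Nat.cast_ne_zero.mpr hk), rpow_one, rpow_natCast,
    abs_of_nonneg k.cast_nonneg, ← Nat.cast_pred (Nat.pos_of_ne_zero hk), rpow_natCast,
    smul_eq_mul, pow_add, ← pow_mul]
  ring

lemma integrableOn_pow_mul_comp_rpow_one_div_iff (f : ℝ → ℝ) (n : ℕ) {k : ℕ} (hk : k ≠ 0) :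
    IntegrableOn (fun y : ℝ => y ^ n * f (y ^ ((1 : ℝ) / k))) (Ioi 0) ↔
      IntegrableOn (fun x : ℝ => x ^ (k * n + (k - 1)) * f x) (Ioi 0) := by
  rw [← integrableOn_Ioi_comp_rpow_iff _ (Nat.cast_ne_zero.mpr hk),
    integrableOn_congr_fun (fun x (hx : x ∈ Ioi 0) => rpow_smul_comp_rpow_one_div f n hk hx)
      measurableSet_Ioi]
  exact integrable_const_mul_iff (IsUnit.mk0 _ (Nat.cast_ne_zero.mpr hk)) _

lemma integral_pow_mul_comp_rpow_one_div (f : ℝ → ℝ) (n : ℕ) {k : ℕ} (hk : k ≠ 0) :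
    ∫ y in Ioi (0 : ℝ), y ^ n * f (y ^ ((1 : ℝ) / k)) =
      k * ∫ x in Ioi (0 : ℝ), x ^ (k * n + (k - 1)) * f x := by
  rw [← integral_comp_rpow_Ioi _ (Nat.cast_ne_zero.mpr hk),
    setIntegral_congr_fun measurableSet_Ioi (fun x hx => rpow_smul_comp_rpow_one_div f n hk hx),
    integral_const_mul]

noncomputable def stieltjesWeight (y : ℝ) : ℝ :=
  Real.exp (-y ^ ((1 : ℝ) / 4)) * Real.sin (y ^ ((1 : ℝ) / 4))

lemma integrableOn_pow_mul_stieltjesWeight (n : ℕ) :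
    IntegrableOn (fun y : ℝ => y ^ n * stieltjesWeight y) (Ioi 0) := by
  have h := (integrableOn_pow_mul_comp_rpow_one_div_iff (fun x => Real.exp (-x) * Real.sin x) n
    four_ne_zero).2 (integrableOn_pow_mul_exp_neg_mul_sin _)
  simp only [Nat.cast_ofNat] at h
  exact h

lemma integral_pow_mul_stieltjesWeight (n : ℕ) :
    ∫ y in Ioi (0 : ℝ), y ^ n * stieltjesWeight y = 0 := by
  have h := integral_pow_mul_comp_rpow_one_div (fun x => Real.exp (-x) * Real.sin x) n
    four_ne_zero
  simp only [Nat.cast_ofNat, Nat.add_one_sub_one] at h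
  unfold stieltjesWeight
  rw [h, integral_pow_four_mul_add_three_mul_exp_neg_mul_sin, mul_zero]

lemma integral_eval_mul_stieltjesWeight (p : ℝ[X]) :
    ∫ y in Ioi (0 : ℝ), p.eval y * stieltjesWeight y = 0 := by
  simp_rw [eval_eq_sum_range, Finset.sum_mul, mul_assoc]
  rw [integral_finsetSum _ fun i _ => (integrableOn_pow_mul_stieltjesWeight i).const_mul _]
  simp [integral_const_mul, integral_pow_mul_stieltjesWeight]

lemma setIntegral_Ioi_eq_comp_add (f : ℝ → ℝ) (c : ℝ) :
    ∫ x in Ioi c, f x = ∫ y in Ioi 0, f (y + c) := by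
  rw [← (measurePreserving_add_right volume c).setIntegral_preimage_emb
    (measurableEmbedding_addRight c)]
  simp

theorem shifted_stieltjes_vanishing_moments (k : ℕ) :
    (∫ x in Set.Ioi (1 : ℝ),
        x ^ k * Real.exp (-((x - 1) ^ ((1 : ℝ) / 4))) * Real.sin ((x - 1) ^ ((1 : ℝ) / 4))) = 0 := by
  rw [setIntegral_Ioi_eq_comp_add _ 1]
  have h := integral_eval_mul_stieltjesWeight ((X + 1) ^ k)
  simp only [eval_pow, eval_add, eval_X, eval_one] at h
  simpa only [stieltjesWeight, add_sub_cancel_right, mul_assoc] using h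
end
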